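/- arXiv:1304.6244 — 5 statements merged into one kernel-verified Lean document; each statement's English description precedes it below -/
import Mathlib

section
/- The Galois numbers satisfy the Goldman-Rota recurrence G_q(n+1) = 2·G_q(n) + (q^n − 1)·G_q(n−1) for n ≥ 1, with G_q(0) = 1 and G_q(1) = 2. -/
/-- The Gaussian (q-)binomial coefficient, defined by the q-Pascal recursion. -/
def gaussBinom (q : ℕ) : ℕ → ℕ → ℕ
  | _, 0 => 1
  | 0, _ + 1 => 0
  | n + 1, k + 1 => gaussBinom q n k + q ^ (k + 1) * gaussBinom q n (k + 1)

/-- The Galois number `G_q(n)`: the total number of subspaces of an `n`-dimensional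
vector space over `F_q`. -/
def galoisNumber (q n : ℕ) : ℕ := ∑ k ∈ Finset.range (n + 1), gaussBinom q n k

/-!
Besides the Galois number `G n = ∑ₖ [n, k]` consider `W n = ∑ₖ qᵏ [n, k]`. The defining
q-Pascal rule `[n+1, k+1] = [n, k] + q^(k+1) [n, k+1]` gives `G (n+1) = G n + W n`, and the
dual rule `[n+1, k+1] = q^(n-k) [n, k] + [n, k+1]` gives `W (n+1) = q^(n+1) G n + W n`.
Eliminating `W` yields `G (n+2) = 2 G (n+1) + (q^(n+1) - 1) G n`.
-/

namespace gaussBinom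

variable (q : ℕ)

@[simp]
theorem zero_right (n : ℕ) : gaussBinom q n 0 = 1 := by
  cases n <;> rfl

theorem succ_succ (n k : ℕ) :
    gaussBinom q (n + 1) (k + 1) = gaussBinom q n k + q ^ (k + 1) * gaussBinom q n (k + 1) :=
  rfl

theorem eq_zero_of_lt : ∀ {n k : ℕ}, n < k → gaussBinom q n k = 0
  | 0, _ + 1, _ => rfl
  | n + 1, k + 1, h => by
    rw [succ_succ, eq_zero_of_lt (by omega), eq_zero_of_lt (by omega), mul_zero, add_zero]

/-- The dual q-Pascal rule. For `n ≤ k` the truncated exponent `n - k` is `0` and this is the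
ordinary Pascal rule, as `[n, k+1] = 0`. -/
theorem succ_succ' : ∀ n k : ℕ,
    gaussBinom q (n + 1) (k + 1) = q ^ (n - k) * gaussBinom q n k + gaussBinom q n (k + 1)
  | 0, k => by cases k <;> rfl
  | n + 1, 0 => by
    have ih : gaussBinom q (n + 1) 1 = q ^ n + gaussBinom q n 1 := by
      simpa using succ_succ' n 0
    calc gaussBinom q (n + 2) 1 = 1 + q * gaussBinom q (n + 1) 1 := by simp [succ_succ]
      _ = q ^ (n + 1) + (1 + q * gaussBinom q n 1) := by rw [ih]; ring
      _ = q ^ (n + 1 - 0) * gaussBinom q (n + 1) 0 + gaussBinom q (n + 1) 1 := by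
        simp [succ_succ]
  | n + 1, k + 1 => by
    rw [succ_succ q (n + 1) (k + 1), Nat.add_sub_add_right]
    rcases Nat.lt_or_ge k n with hkn | hnk
    · obtain ⟨d, rfl⟩ := Nat.exists_eq_add_of_lt hkn
      have hd₁ : k + d + 1 - k = d + 1 := by omega
      have hd : k + d + 1 - (k + 1) = d := by omega
      calc gaussBinom q (k + d + 1 + 1) (k + 1)
            + q ^ (k + 1 + 1) * gaussBinom q (k + d + 1 + 1) (k + 1 + 1)
          = (q ^ (d + 1) * gaussBinom q (k + d + 1) k + gaussBinom q (k + d + 1) (k + 1))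
            + q ^ (k + 1 + 1) * (q ^ d * gaussBinom q (k + d + 1) (k + 1)
              + gaussBinom q (k + d + 1) (k + 1 + 1)) := by
            rw [succ_succ' (k + d + 1) k, succ_succ' (k + d + 1) (k + 1), hd₁, hd]
        _ = q ^ (d + 1) * (gaussBinom q (k + d + 1) k
              + q ^ (k + 1) * gaussBinom q (k + d + 1) (k + 1))
            + (gaussBinom q (k + d + 1) (k + 1)
              + q ^ (k + 1 + 1) * gaussBinom q (k + d + 1) (k + 1 + 1)) := by ring
        _ = _ := by rw [← succ_succ q (k + d + 1) k, ← succ_succ q (k + d + 1) (k + 1), hd₁]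
    · rw [eq_zero_of_lt q (show n + 1 < k + 1 + 1 by omega), Nat.sub_eq_zero_of_le hnk]
      ring

end gaussBinom

def weightedGaloisNumber (q n : ℕ) : ℕ := ∑ k ∈ Finset.range (n + 1), q ^ k * gaussBinom q n k

theorem galoisNumber_zero (q : ℕ) : galoisNumber q 0 = 1 := rfl

theorem weightedGaloisNumber_eq_sum_add_one (q n : ℕ) :
    weightedGaloisNumber q n
      = ∑ k ∈ Finset.range (n + 1), q ^ (k + 1) * gaussBinom q n (k + 1) + 1 := by
  have extend :
      ∑ k ∈ Finset.range (n + 2), q ^ k * gaussBinom q n k = weightedGaloisNumber q n := by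
    rw [Finset.sum_range_succ, gaussBinom.eq_zero_of_lt q (Nat.lt_succ_self n), mul_zero,
      add_zero, weightedGaloisNumber]
  rw [← extend, Finset.sum_range_succ']
  simp

theorem galoisNumber_succ (q n : ℕ) :
    galoisNumber q (n + 1) = galoisNumber q n + weightedGaloisNumber q n := by
  rw [galoisNumber, Finset.sum_range_succ', gaussBinom.zero_right]
  simp only [gaussBinom.succ_succ, Finset.sum_add_distrib]
  rw [weightedGaloisNumber_eq_sum_add_one, galoisNumber, add_assoc]

theorem weightedGaloisNumber_succ (q n : ℕ) :
    weightedGaloisNumber q (n + 1)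
      = q ^ (n + 1) * galoisNumber q n + weightedGaloisNumber q n := by
  have pascal : ∀ k ∈ Finset.range (n + 1),
      q ^ (k + 1) * gaussBinom q (n + 1) (k + 1)
        = q ^ (n + 1) * gaussBinom q n k + q ^ (k + 1) * gaussBinom q n (k + 1) := by
    intro k hk
    have hkn := Finset.mem_range_succ_iff.mp hk
    rw [gaussBinom.succ_succ', mul_add, ← mul_assoc, ← pow_add,
      show k + 1 + (n - k) = n + 1 by omega]
  rw [weightedGaloisNumber, Finset.sum_range_succ', pow_zero, gaussBinom.zero_right, mul_one,
    Finset.sum_congr rfl pascal, Finset.sum_add_distrib,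
    ← Finset.mul_sum, weightedGaloisNumber_eq_sum_add_one, galoisNumber, add_assoc]

theorem galoisNumber_one (q : ℕ) : galoisNumber q 1 = 2 := by
  rw [galoisNumber_succ]
  rfl

theorem galoisNumber_add_two (q n : ℕ) :
    galoisNumber q (n + 2) + galoisNumber q n
      = 2 * galoisNumber q (n + 1) + q ^ (n + 1) * galoisNumber q n := by
  rw [galoisNumber_succ q (n + 1), weightedGaloisNumber_succ, galoisNumber_succ q n]
  ring

theorem galoisNumber_goldman_rota_general (q n : ℕ) :
    (galoisNumber q (n + 1) : ℤ) =
        2 * (galoisNumber q n : ℤ) + ((q : ℤ) ^ n - 1) * (galoisNumber q (n - 1) : ℤ) ∧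
      galoisNumber q 0 = 1 ∧ galoisNumber q 1 = 2 := by
  refine ⟨?_, galoisNumber_zero q, galoisNumber_one q⟩
  cases n with
  | zero => simp [galoisNumber_zero, galoisNumber_one]
  | succ m =>
    have h := congrArg (Nat.cast : ℕ → ℤ) (galoisNumber_add_two q m)
    push_cast at h
    simp only [Nat.add_sub_cancel]
    linear_combination h

/-- Goldman-Rota recurrence: `G_q(n+1) = 2 G_q(n) + (q^n - 1) G_q(n-1)` for `n ≥ 1`,
with `G_q(0) = 1` and `G_q(1) = 2`. -/
theorem galoisNumber_goldman_rota (q n : ℕ) (hq : IsPrimePow q) (hn : 1 ≤ n) :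
    (galoisNumber q (n + 1) : ℤ) =
        2 * (galoisNumber q n : ℤ) + ((q : ℤ) ^ n - 1) * (galoisNumber q (n - 1) : ℤ) ∧
      galoisNumber q 0 = 1 ∧ galoisNumber q 1 = 2 :=
  galoisNumber_goldman_rota_general q n
end

section
/- Under the natural action of H(n+1,q) on subspaces of F_q^{n+1}, the orbit of a subspace X ⊄ F_q^n is exactly the set of subspaces Y ⊄ F_q^n with Y ∩ F_q^n = X ∩ F_q^n; in particular, if dim X = k, the orbit has size q^{n+1−k}. -/
/-- The matrix `[[I, a], [0, 1]]` over `F`, indexed by `Fin n ⊕ Unit`. -/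
def Hmat {F : Type} [Field F] {n : ℕ} (a : Fin n → F) :
    Matrix (Fin n ⊕ Unit) (Fin n ⊕ Unit) F :=
  Matrix.fromBlocks 1 (Matrix.of fun i (_ : Unit) => a i) 0 1

/-- The action of the element `[[I, a], [0, 1]]` of `H(n+1, q)` on subspaces of
`F_q^{n+1}`. -/
def actH {F : Type} [Field F] {n : ℕ} (a : Fin n → F)
    (X : Submodule F (Fin n ⊕ Unit → F)) : Submodule F (Fin n ⊕ Unit → F) :=
  Submodule.map (Matrix.mulVecLin (Hmat a)) X

/-!
Each element of `H(n+1, q)` acts as the transvection `v ↦ v + v_{n+1} • a` with `a ∈ F_q^n`,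
which fixes the hyperplane `F_q^n` pointwise and preserves the last coordinate. Hence it
preserves `X ∩ F_q^n` and does not move `X` into `F_q^n`. Conversely, a subspace `Y ⊄ F_q^n` is
`(Y ∩ F_q^n) ⊕ ⟨y⟩` for any `y ∈ Y` with `y_{n+1} = 1`; if `x ∈ X` is such a vector too and
`Y ∩ F_q^n = X ∩ F_q^n`, the transvection with `a = y - x` sends `x` to `y`, hence `X` onto `Y`.
The same decomposition shows that the stabiliser of `X` is `{a | a ∈ X}`, a copy of `X ∩ F_q^n`
of dimension `k - 1`, so the orbit has `q^n / q^(k-1)` elements.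
-/

open Function Module Submodule LinearMap

section Transvection

variable {R V : Type*} [Ring R] [AddCommGroup V] [Module R V] {f : Dual R V}
  {X Y : Submodule R V} {v w x y : V}

theorem LinearMap.dual_comp_transvection (hv : f v = 0) : f ∘ₗ transvection f v = f := by
  ext x
  simp [transvection.apply, hv]

namespace Submodule

theorem map_transvection_of_le_ker {Z : Submodule R V} (hZ : Z ≤ ker f) :
    Z.map (transvection f v) = Z := by
  ext x
  constructor
  · rintro ⟨y, hy, rfl⟩
    rwa [transvection.apply, mem_ker.1 (hZ hy), zero_smul, add_zero]
  · intro hx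
    exact ⟨x, hx, by rw [transvection.apply, mem_ker.1 (hZ hx), zero_smul, add_zero]⟩

theorem map_transvection_inf_ker (hv : f v = 0) (X : Submodule R V) :
    X.map (transvection f v) ⊓ ker f = X ⊓ ker f := by
  rw [map_inf_eq_map_inf_comap, ← ker_comp, dual_comp_transvection hv,
    map_transvection_of_le_ker inf_le_right]

theorem map_transvection_le_ker_iff (hv : f v = 0) :
    X.map (transvection f v) ≤ ker f ↔ X ≤ ker f := by
  rw [map_le_iff_le_comap, ← ker_comp, dual_comp_transvection hv]

theorem inf_ker_sup_span_singleton (hx : x ∈ X) (hfx : f x = 1) :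
    X ⊓ ker f ⊔ span R {x} = X := by
  refine le_antisymm (sup_le inf_le_left ((span_singleton_le_iff_mem x X).2 hx)) fun z hz => ?_
  have hz' : z - f z • x ∈ X ⊓ ker f := ⟨X.sub_mem hz (X.smul_mem _ hx), by simp [hfx]⟩
  have hzx : f z • x ∈ span R {x} := smul_mem _ _ (mem_span_singleton_self x)
  simpa using add_mem (mem_sup_left hz') (mem_sup_right hzx)

theorem map_transvection_sub_eq (hXY : X ⊓ ker f = Y ⊓ ker f) (hx : x ∈ X) (hy : y ∈ Y)
    (hfx : f x = 1) (hfy : f y = 1) : X.map (transvection f (y - x)) = Y := by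
  have hxy : transvection f (y - x) x = y := by simp [transvection.apply, hfx]
  rw [← inf_ker_sup_span_singleton hx hfx, map_sup, map_transvection_of_le_ker inf_le_right,
    map_span, Set.image_singleton, hxy, hXY, inf_ker_sup_span_singleton hy hfy]

theorem map_transvection_eq_self_iff (hv : f v = 0) (hx : x ∈ X) (hfx : f x = 1) :
    X.map (transvection f v) = X ↔ v ∈ X := by
  refine ⟨fun h => ?_, fun h => ?_⟩
  · have : transvection f v x ∈ X := h ▸ mem_map_of_mem hx
    rw [transvection.apply, hfx, one_smul] at this
    simpa using X.sub_mem this hx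
  · simpa using map_transvection_sub_eq rfl hx (X.add_mem hx h) hfx (by simp [hfx, hv])

theorem map_transvection_eq_iff (hv : f v = 0) (hw : f w = 0) (hx : x ∈ X) (hfx : f x = 1) :
    X.map (transvection f v) = X.map (transvection f w) ↔ v - w ∈ X := by
  set Y := X.map (transvection f w)
  have hvw : f (v - w) = 0 := by simp [hv, hw]
  have hY : X.map (transvection f v) = Y.map (transvection f (v - w)) := by
    rw [← map_comp, transvection.comp_of_left_eq hw, sub_add_cancel]
  have hfy : f (transvection f w x) = 1 := by
    rw [← LinearMap.comp_apply, dual_comp_transvection hw, hfx]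
  have hmem : v - w ∈ Y ↔ v - w ∈ X := by
    simpa only [mem_inf, mem_ker, hvw, and_true] using
      SetLike.ext_iff.1 (map_transvection_inf_ker hw X) (v - w)
  rw [hY, map_transvection_eq_self_iff hvw (mem_map_of_mem hx) hfy, hmem]

end Submodule

end Transvection

section Field

variable {K V : Type*} [Field K] [AddCommGroup V] [Module K V] {f : Dual K V}
  {X : Submodule K V} {x : V}

theorem Submodule.exists_mem_eq_one_of_not_le_ker (hX : ¬ X ≤ ker f) : ∃ x ∈ X, f x = 1 := by
  obtain ⟨z, hz, hfz⟩ := SetLike.not_le_iff_exists.1 hX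
  exact ⟨(f z)⁻¹ • z, X.smul_mem _ hz, by simp [inv_mul_cancel₀ (mem_ker.not.1 hfz)]⟩

theorem Submodule.finrank_inf_ker_add_one [FiniteDimensional K V] (hx : x ∈ X) (hfx : f x = 1) :
    finrank K ↥(X ⊓ ker f) + 1 = finrank K X := by
  have hdisj : X ⊓ ker f ⊓ span K {x} = ⊥ := by
    refine eq_bot_iff.2 fun z ⟨⟨_, hzf⟩, hzx⟩ => ?_
    obtain ⟨c, rfl⟩ := mem_span_singleton.1 hzx
    simp_all
  have hx0 : x ≠ 0 := by rintro rfl; simp at hfx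
  have := finrank_sup_add_finrank_inf_eq (X ⊓ ker f) (span K {x})
  rwa [inf_ker_sup_span_singleton hx hfx, hdisj, finrank_bot, add_zero,
    finrank_span_singleton hx0, eq_comm] at this

theorem Submodule.finrank_comap_of_injective {U : Type*} [AddCommGroup U] [Module K U]
    {e : U →ₗ[K] V} (he : Injective e) (X : Submodule K V) :
    finrank K (X.comap e) = finrank K ↥(X ⊓ range e) := by
  rw [(equivMapOfInjective e he _).finrank_eq, map_comap_eq, inf_comm]

end Field

theorem Submodule.natCard_range_eq_natCard_quotient {R M β : Type*} [Ring R] [AddCommGroup M]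
    [Module R M] (W : Submodule R M) {g : M → β} (hg : ∀ a b, g a = g b ↔ a - b ∈ W) :
    Nat.card (Set.range g) = Nat.card (M ⧸ W) :=
  Nat.card_congr ((Setoid.quotientKerEquivRange g).symm.trans
    (Quotient.congrRight fun a b => (hg a b).trans W.quotientRel_def.symm))

theorem range_extendByZero_inl {R ι : Type*} [Semiring R] :
    range (ExtendByZero.linearMap R (Sum.inl : ι → ι ⊕ Unit)) =
      ker (proj (R := R) (Sum.inr () : ι ⊕ Unit)) := by
  ext v
  constructor
  · rintro ⟨a, rfl⟩
    simp [extend_apply']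
  · intro hv
    refine ⟨v ∘ Sum.inl, funext fun j => ?_⟩
    rcases j with i | u
    · simp [Sum.inl_injective.extend_apply]
    · simpa [extend_apply', eq_comm] using hv

theorem proj_inr_extendByZero_inl {R ι : Type*} [Semiring R] (a : ι → R) :
    proj (R := R) (Sum.inr () : ι ⊕ Unit) (ExtendByZero.linearMap R Sum.inl a) = 0 := by
  rw [← mem_ker, ← range_extendByZero_inl]
  exact mem_range_self _ a

section H

variable {F : Type} [Field F] {n : ℕ}

theorem Hmat_mulVecLin_eq_transvection (a : Fin n → F) :
    (Hmat a).mulVecLin =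
      transvection (proj (Sum.inr ())) (ExtendByZero.linearMap F Sum.inl a) := by
  ext v (i | u)
  · simp [Hmat, Matrix.mulVec, dotProduct, Fintype.sum_sum_type, Matrix.one_apply,
      transvection.apply, Sum.inl_injective.extend_apply, mul_comm]
  · simp [Hmat, Matrix.mulVec, dotProduct, Fintype.sum_sum_type, transvection.apply]

theorem actH_eq_map_transvection (a : Fin n → F) (X : Submodule F (Fin n ⊕ Unit → F)) :
    actH a X =
      X.map (transvection (proj (Sum.inr ())) (ExtendByZero.linearMap F Sum.inl a)) := by
  rw [actH, Hmat_mulVecLin_eq_transvection]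

variable {X : Submodule F (Fin n ⊕ Unit → F)} {x : Fin n ⊕ Unit → F}

theorem actH_eq_actH_iff (hx : x ∈ X) (hfx : x (Sum.inr ()) = 1) (a b : Fin n → F) :
    actH a X = actH b X ↔ a - b ∈ X.comap (ExtendByZero.linearMap F Sum.inl) := by
  rw [actH_eq_map_transvection, actH_eq_map_transvection, mem_comap, map_sub]
  exact map_transvection_eq_iff (proj_inr_extendByZero_inl a) (proj_inr_extendByZero_inl b) hx hfx

theorem finrank_quotient_comap_extendByZero_inl_add (hx : x ∈ X) (hfx : x (Sum.inr ()) = 1) :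
    finrank F ((Fin n → F) ⧸ X.comap (ExtendByZero.linearMap F Sum.inl)) + finrank F X = n + 1 := by
  have hcomap := finrank_comap_of_injective
    (e := ExtendByZero.linearMap F Sum.inl) (extend_injective Sum.inl_injective _) X
  rw [range_extendByZero_inl] at hcomap
  have hker := finrank_inf_ker_add_one (f := proj (Sum.inr ())) hx hfx
  have hsum := finrank_quotient_add_finrank (X.comap (ExtendByZero.linearMap F Sum.inl))
  rw [finrank_fin_fun] at hsum
  omega

end H

/-- Under the action of `H(n+1, q)` on subspaces of `F_q^{n+1}`, the orbit of a subspace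
`X ⊄ F_q^n` is exactly the set of subspaces `Y ⊄ F_q^n` with `Y ∩ F_q^n = X ∩ F_q^n`;
if `dim X = k`, the orbit has size `q^{n+1-k}`. -/
theorem H_orbit_eq_and_card (F : Type) [Field F] [Fintype F] (n k : ℕ)
    (Hyp : Submodule F (Fin n ⊕ Unit → F))
    (hHyp : Hyp = LinearMap.ker (LinearMap.proj (R := F) (Sum.inr () : Fin n ⊕ Unit)))
    (X : Submodule F (Fin n ⊕ Unit → F)) (hX : ¬ X ≤ Hyp)
    (hk : Module.finrank F ↥X = k) :
    {Y | ∃ a : Fin n → F, Y = actH a X} =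
        {Y : Submodule F (Fin n ⊕ Unit → F) | ¬ Y ≤ Hyp ∧ Y ⊓ Hyp = X ⊓ Hyp} ∧
      Nat.card {Y : Submodule F (Fin n ⊕ Unit → F) // ∃ a : Fin n → F, Y = actH a X} =
        Fintype.card F ^ (n + 1 - k) := by
  subst hHyp
  obtain ⟨x, hx, hfx⟩ := exists_mem_eq_one_of_not_le_ker hX
  refine ⟨Set.ext fun Y => ⟨?_, fun ⟨hY, hYX⟩ => ?_⟩, ?_⟩
  · rintro ⟨a, rfl⟩
    rw [actH_eq_map_transvection]
    exact ⟨(map_transvection_le_ker_iff (proj_inr_extendByZero_inl a)).not.2 hX,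
      map_transvection_inf_ker (proj_inr_extendByZero_inl a) X⟩
  · obtain ⟨y, hy, hfy⟩ := exists_mem_eq_one_of_not_le_ker hY
    obtain ⟨a, ha⟩ : y - x ∈ range (ExtendByZero.linearMap F Sum.inl) := by
      rw [range_extendByZero_inl, mem_ker, map_sub, hfx, hfy, sub_self]
    exact ⟨a, by rw [actH_eq_map_transvection, ha, map_transvection_sub_eq hYX.symm hx hy hfx hfy]⟩
  · have hfinrank := finrank_quotient_comap_extendByZero_inl_add hx hfx
    calc Nat.card {Y // ∃ a : Fin n → F, Y = actH a X}
        = Nat.card (Set.range fun a => actH a X) :=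
          Nat.card_congr (Equiv.subtypeEquivRight fun Y => by simp [eq_comm])
      _ = Nat.card ((Fin n → F) ⧸ X.comap (ExtendByZero.linearMap F Sum.inl)) :=
          natCard_range_eq_natCard_quotient _ (actH_eq_actH_iff hx hfx)
      _ = Fintype.card F ^ (n + 1 - k) := by
        rw [Nat.card_eq_fintype_card, card_eq_pow_finrank (K := F)]
        congr 1
        omega
end

section
/- Let g = [[I,a],[0,1]] ∈ H(n+1,q) with a ≠ 0, and let X be a subspace of F_q^{n+1} not contained in F_q^n. Then gX = X if and only if the vector (a,0) ∈ F_q^{n+1} lies in X ∩ F_q^n. Consequently g fixes either all elements of the orbit [X] or none. -/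
/-!
Write `e a` for the vector `(a, 0)`. The matrix `Hmat a` acts by `v ↦ v + v_∞ • e a`, where `v_∞`
is the last coordinate, so it preserves `v_∞` and fixes `F^n = {v_∞ = 0}` pointwise. If `X`
contains a vector `x` with `x_∞ ≠ 0`, then `Hmat a x - x = x_∞ • e a` shows that `Hmat a` can only
fix `X` when `e a ∈ X`, and conversely `e a ∈ X` makes `X` stable. Moving `X` inside its orbit
changes neither the hypothesis on `X` nor whether `e a ∈ X`, hence the dichotomy.
-/

section

variable {F : Type} [Field F] {n : ℕ}

theorem Hmat_mulVec (a : Fin n → F) (v : Fin n ⊕ Unit → F) :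
    (Hmat a).mulVec v = v + v (Sum.inr ()) • Sum.elim a (fun _ => 0) := by
  funext i
  rcases i with i | ⟨⟩
  · simp [Hmat, Matrix.mulVec, Matrix.fromBlocks, dotProduct, Fintype.sum_sum_type,
      Matrix.one_apply, mul_comm]
  · simp [Hmat, Matrix.mulVec, Matrix.fromBlocks, dotProduct, Fintype.sum_sum_type]

theorem proj_inr_comp_Hmat_mulVecLin (a : Fin n → F) :
    (LinearMap.proj (R := F) (Sum.inr () : Fin n ⊕ Unit)).comp (Hmat a).mulVecLin =
      LinearMap.proj (Sum.inr ()) :=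
  LinearMap.ext fun v => by simp [Hmat_mulVec]

theorem Hmat_mulVecLin_of_inr_eq_zero (a : Fin n → F) {v : Fin n ⊕ Unit → F}
    (hv : v (Sum.inr ()) = 0) : (Hmat a).mulVecLin v = v := by
  simp [Hmat_mulVec, hv]

theorem actH_le_ker_proj_inr_iff (b : Fin n → F) (X : Submodule F (Fin n ⊕ Unit → F)) :
    actH b X ≤ LinearMap.ker (LinearMap.proj (Sum.inr ())) ↔
      X ≤ LinearMap.ker (LinearMap.proj (Sum.inr ())) := by
  rw [actH, Submodule.map_le_iff_le_comap, ← LinearMap.ker_comp, proj_inr_comp_Hmat_mulVecLin]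

theorem elim_mem_actH_iff (a b : Fin n → F) (X : Submodule F (Fin n ⊕ Unit → F)) :
    Sum.elim a (fun _ => 0) ∈ actH b X ↔ Sum.elim a (fun _ => 0) ∈ X := by
  constructor
  · rintro ⟨y, hyX, hy⟩
    have hy_inr : y (Sum.inr ()) = 0 := by
      simpa [Hmat_mulVec] using congrFun hy (Sum.inr ())
    rwa [← hy, Hmat_mulVecLin_of_inr_eq_zero b hy_inr]
  · intro h
    exact ⟨_, h, Hmat_mulVecLin_of_inr_eq_zero b rfl⟩

theorem actH_eq_self_iff (a : Fin n → F) {X : Submodule F (Fin n ⊕ Unit → F)}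
    (hX : ¬ X ≤ LinearMap.ker (LinearMap.proj (Sum.inr ()))) :
    actH a X = X ↔ Sum.elim a (fun _ => 0) ∈ X := by
  set e : Fin n ⊕ Unit → F := Sum.elim a (fun _ => 0)
  constructor
  · intro hfix
    obtain ⟨x, hxX, hx⟩ := SetLike.not_le_iff_exists.mp hX
    replace hx : x (Sum.inr ()) ≠ 0 := hx
    have hgx : (Hmat a).mulVecLin x ∈ X := hfix ▸ Submodule.mem_map_of_mem hxX
    have hxe : x (Sum.inr ()) • e ∈ X := by
      simpa [Hmat_mulVec] using X.sub_mem hgx hxX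
    simpa [hx] using X.smul_mem (x (Sum.inr ()))⁻¹ hxe
  · intro he
    apply le_antisymm
    · rintro _ ⟨y, hyX, rfl⟩
      rw [Matrix.mulVecLin_apply, Hmat_mulVec]
      exact X.add_mem hyX (X.smul_mem _ he)
    · intro y hyX
      refine ⟨y - y (Sum.inr ()) • e, X.sub_mem hyX (X.smul_mem _ he), ?_⟩
      simp [Hmat_mulVec, e]

end

theorem H_fixes_iff_vector_mem_general (F : Type) [Field F] (n : ℕ)
    (Hyp : Submodule F (Fin n ⊕ Unit → F))
    (hHyp : Hyp = LinearMap.ker (LinearMap.proj (R := F) (Sum.inr () : Fin n ⊕ Unit)))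
    (a : Fin n → F)
    (X : Submodule F (Fin n ⊕ Unit → F)) (hX : ¬ X ≤ Hyp) :
    (actH a X = X ↔ (Sum.elim a (fun _ => 0) : Fin n ⊕ Unit → F) ∈ X ⊓ Hyp) ∧
    ((∀ Y : Submodule F (Fin n ⊕ Unit → F), (∃ b : Fin n → F, Y = actH b X) →
        actH a Y = Y) ∨
      (∀ Y : Submodule F (Fin n ⊕ Unit → F), (∃ b : Fin n → F, Y = actH b X) →
        actH a Y ≠ Y)) := by
  subst hHyp
  have fix_orbit_iff (b : Fin n → F) :
      actH a (actH b X) = actH b X ↔ Sum.elim a (fun _ => 0) ∈ X := by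
    rw [actH_eq_self_iff a ((actH_le_ker_proj_inr_iff b X).not.mpr hX), elim_mem_actH_iff]
  refine ⟨?_, ?_⟩
  · rw [actH_eq_self_iff a hX, Submodule.mem_inf]
    exact (and_iff_left rfl).symm
  · by_cases he : Sum.elim a (fun _ => 0) ∈ X
    · exact Or.inl fun _ ⟨b, hY⟩ => hY ▸ (fix_orbit_iff b).mpr he
    · exact Or.inr fun _ ⟨b, hY⟩ => hY ▸ mt (fix_orbit_iff b).mp he

/-- Let `g = [[I, a], [0, 1]] ∈ H(n+1, q)` with `a ≠ 0` and let `X ⊄ F_q^n` be a subspace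
of `F_q^{n+1}`.  Then `gX = X` iff the vector `(a, 0)` lies in `X ∩ F_q^n`; consequently
`g` fixes either all elements of the orbit `[X]` or none. -/
theorem H_fixes_iff_vector_mem (F : Type) [Field F] [Fintype F] (n : ℕ)
    (Hyp : Submodule F (Fin n ⊕ Unit → F))
    (hHyp : Hyp = LinearMap.ker (LinearMap.proj (R := F) (Sum.inr () : Fin n ⊕ Unit)))
    (a : Fin n → F) (ha : a ≠ 0)
    (X : Submodule F (Fin n ⊕ Unit → F)) (hX : ¬ X ≤ Hyp) :
    (actH a X = X ↔ (Sum.elim a (fun _ => 0) : Fin n ⊕ Unit → F) ∈ X ⊓ Hyp) ∧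
    ((∀ Y : Submodule F (Fin n ⊕ Unit → F), (∃ b : Fin n → F, Y = actH b X) →
        actH a Y = Y) ∨
      (∀ Y : Submodule F (Fin n ⊕ Unit → F), (∃ b : Fin n → F, Y = actH b X) →
        actH a Y ≠ Y)) :=
  H_fixes_iff_vector_mem_general F n Hyp hHyp a X hX
end

section
/- With θ_n defined by θ_n(X) = Σ{Y ⊆ F_q^{n+1} : Y ⊄ F_q^n, Y ∩ F_q^n = X}, one has θ_n(q·U_n(v)) = U_{n+1}(θ_n(v)) for all v in the span of subspaces of F_q^n; i.e., θ_n intertwines q·U_n with U_{n+1}. -/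
/-!
Write `H = ker π` for the last-coordinate functional `π`. The coefficient of `T` on the left
is `q` if `T ⊄ H` and `T ⊓ H` covers `X`, and `0` otherwise. On the right one counts the
subspaces `Y` covered by `T` with `Y ⊄ H` and `Y ⊓ H = X`; any such `Y` is `X ⊔ ⟨w⟩` for every
`w ∈ Y \ H`, and their existence forces `T ⊓ H` to cover `X`. Then `T ⊓ H = X ⊔ ⟨z⟩`, and for a
fixed `t ∈ T \ H` these `Y` are exactly the `q` distinct subspaces `X ⊔ ⟨t + c • z⟩`, `c ∈ F`.
-/

open Module Submodule LinearMap Function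

section Hyperplane

variable {K V : Type*} [DivisionRing K] [AddCommGroup V] [Module K V] {π : V →ₗ[K] K}

lemma finrank_inf_ker_add_one [FiniteDimensional K V] {W : Submodule K V} (hW : ¬ W ≤ ker π) :
    finrank K ↥(W ⊓ ker π) + 1 = finrank K W := by
  have hne : π ∘ₗ W.subtype ≠ 0 := by
    obtain ⟨w, hw, hπw⟩ := SetLike.not_le_iff_exists.mp hW
    exact fun h => hπw (by simpa using LinearMap.congr_fun h ⟨w, hw⟩)
  rw [← Dual.finrank_ker_add_one_of_ne_zero hne, ker_comp, ← map_comap_subtype,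
    finrank_map_subtype_eq]

lemma sup_span_singleton_inf_ker {X : Submodule K V} (hX : X ≤ ker π) {w : V} (hw : π w ≠ 0) :
    (X ⊔ K ∙ w) ⊓ ker π = X := by
  refine le_antisymm (fun v ⟨hv, hvπ⟩ => ?_) (le_inf le_sup_left hX)
  obtain ⟨x, hx, _, hw', rfl⟩ := mem_sup.mp hv
  obtain ⟨a, rfl⟩ := mem_span_singleton.mp hw'
  have ha : a = 0 := by simpa [mem_ker.mp (hX hx), hw] using hvπ
  simpa [ha] using hx

lemma eq_sup_span_singleton_of_inf_ker_eq [FiniteDimensional K V] {X Y : Submodule K V}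
    (hY : Y ⊓ ker π = X) {w : V} (hwY : w ∈ Y) (hw : π w ≠ 0) : Y = X ⊔ K ∙ w := by
  have hX : X ≤ ker π := hY ▸ inf_le_right
  have hYker : ¬ Y ≤ ker π := fun h => hw (h hwY)
  have hwX : w ∉ X := fun h => hw (hX h)
  refine (eq_of_le_of_finrank_eq
    (sup_le (hY ▸ inf_le_left) ((span_singleton_le_iff_mem _ _).mpr hwY)) ?_).symm
  rw [finrank_sup_span_singleton hwX, ← hY, finrank_inf_ker_add_one hYker]

lemma sup_span_singleton_add_smul_injective {X : Submodule K V} (hX : X ≤ ker π) {t z : V}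
    (ht : π t ≠ 0) (hz : π z = 0) (hzX : z ∉ X) :
    Injective fun c : K => X ⊔ K ∙ (t + c • z) := by
  intro c d (h : X ⊔ K ∙ (t + c • z) = X ⊔ K ∙ (t + d • z))
  by_contra hcd
  have hmem : (c - d) • z ∈ (X ⊔ K ∙ (t + d • z)) ⊓ ker π := by
    refine ⟨?_, by simp [hz]⟩
    have htc : t + c • z ∈ X ⊔ K ∙ (t + d • z) :=
      h ▸ mem_sup_right (mem_span_singleton_self _)
    have htd : t + d • z ∈ X ⊔ K ∙ (t + d • z) := mem_sup_right (mem_span_singleton_self _)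
    simpa [sub_smul] using sub_mem htc htd
  rw [sup_span_singleton_inf_ker hX (by simp [hz, ht]), X.smul_mem_iff (sub_ne_zero.mpr hcd)]
    at hmem
  exact hzX hmem

lemma exists_eq_sup_span_singleton_add_smul [FiniteDimensional K V] {X Y T : Submodule K V}
    {t z : V} (hTker : T ⊓ ker π = X ⊔ K ∙ z) (htT : t ∈ T) (ht : π t ≠ 0)
    (hY : Y ⊓ ker π = X) (hYker : ¬ Y ≤ ker π) (hYT : Y ≤ T) :
    ∃ c : K, Y = X ⊔ K ∙ (t + c • z) := by
  obtain ⟨y, hyY, hy⟩ := SetLike.not_le_iff_exists.mp hYker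
  set a := π y * (π t)⁻¹
  have ha : a ≠ 0 := mul_ne_zero (by simpa using hy) (inv_ne_zero ht)
  have hya : y - a • t ∈ X ⊔ K ∙ z := by
    refine hTker ▸ ⟨sub_mem (hYT hyY) (T.smul_mem a htT), ?_⟩
    simp [a, mul_assoc, inv_mul_cancel₀ ht]
  obtain ⟨x, hx, _, hz', hxb⟩ := mem_sup.mp hya
  obtain ⟨b, rfl⟩ := mem_span_singleton.mp hz'
  have hmem : t + (a⁻¹ * b) • z ∈ Y := by
    have hyx : y - x = a • t + b • z := by rw [← sub_eq_iff_eq_add.mpr hxb.symm]; abel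
    have := Y.smul_mem a⁻¹ (sub_mem hyY ((hY ▸ inf_le_left : X ≤ Y) hx))
    rwa [hyx, smul_add, smul_smul, smul_smul, inv_mul_cancel₀ ha, one_smul] at this
  have hz : z ∈ T ⊓ ker π := hTker ▸ mem_sup_right (mem_span_singleton_self z)
  exact ⟨a⁻¹ * b, eq_sup_span_singleton_of_inf_ker_eq hY hmem (by simp [mem_ker.mp hz.2, ht])⟩

lemma natCard_covered_inf_ker_eq [Finite K] [FiniteDimensional K V] {X T : Submodule K V}
    (hT : ¬ T ≤ ker π) (hXT : X < T ⊓ ker π) (hdim : finrank K ↥(T ⊓ ker π) = finrank K X + 1) :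
    Nat.card {Y : Submodule K V // (¬ Y ≤ ker π ∧ Y ⊓ ker π = X) ∧ Y < T ∧
      finrank K T = finrank K Y + 1} = Nat.card K := by
  obtain ⟨t, htT, ht⟩ := SetLike.not_le_iff_exists.mp hT
  obtain ⟨z, hz, hzX⟩ := SetLike.exists_of_lt hXT
  replace ht : π t ≠ 0 := by simpa using ht
  have hX : X ≤ ker π := hXT.le.trans inf_le_right
  have hπ (c : K) : π (t + c • z) ≠ 0 := by simp [mem_ker.mp hz.2, ht]
  have hTker : T ⊓ ker π = X ⊔ K ∙ z := (eq_of_le_of_finrank_eq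
    (sup_le hXT.le ((span_singleton_le_iff_mem _ _).mpr hz))
    (by rw [finrank_sup_span_singleton hzX, hdim])).symm
  have hTdim : finrank K T = finrank K X + 2 := by rw [← finrank_inf_ker_add_one hT, hdim]
  have hrange : Set.range (fun c : K => X ⊔ K ∙ (t + c • z)) =
      {Y | (¬ Y ≤ ker π ∧ Y ⊓ ker π = X) ∧ Y < T ∧ finrank K T = finrank K Y + 1} := by
    ext Y
    constructor
    · rintro ⟨c, rfl⟩
      simp only [Set.mem_ofPred_eq]
      have hYker : ¬ X ⊔ K ∙ (t + c • z) ≤ ker π :=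
        fun h => hπ c (h (mem_sup_right (mem_span_singleton_self _)))
      have hYdim : finrank K ↥(X ⊔ K ∙ (t + c • z)) = finrank K X + 1 := by
        rw [← finrank_inf_ker_add_one hYker, sup_span_singleton_inf_ker hX (hπ c)]
      have hYT : X ⊔ K ∙ (t + c • z) ≤ T := sup_le (hXT.le.trans inf_le_left)
        ((span_singleton_le_iff_mem _ _).mpr (add_mem htT (T.smul_mem c hz.1)))
      refine ⟨⟨hYker, sup_span_singleton_inf_ker hX (hπ c)⟩,
        lt_of_le_of_finrank_lt_finrank hYT (by omega), by omega⟩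
    · rintro ⟨⟨hYker, hY⟩, hYT, -⟩
      obtain ⟨c, rfl⟩ := exists_eq_sup_span_singleton_add_smul hTker htT ht hY hYker hYT.le
      exact ⟨c, rfl⟩
  rw [← Nat.card_range_of_injective
    (sup_span_singleton_add_smul_injective hX ht (mem_ker.mp hz.2) hzX), hrange]
  rfl

lemma lt_inf_ker_of_inf_ker_eq [FiniteDimensional K V] {X Y T : Submodule K V}
    (hY : Y ⊓ ker π = X) (hYker : ¬ Y ≤ ker π) (hYT : Y < T)
    (hdim : finrank K T = finrank K Y + 1) :
    ¬ T ≤ ker π ∧ X < T ⊓ ker π ∧ finrank K ↥(T ⊓ ker π) = finrank K X + 1 := by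
  have hT : ¬ T ≤ ker π := fun h => hYker (hYT.le.trans h)
  have hTdim := finrank_inf_ker_add_one hT
  have hYdim := finrank_inf_ker_add_one hYker
  rw [hY] at hYdim
  exact ⟨hT, lt_of_le_of_finrank_lt_finrank (hY ▸ inf_le_inf_right _ hYT.le) (by omega),
    by omega⟩

end Hyperplane

theorem theta_intertwines_general (F : Type) [Field F] [Fintype F] (n : ℕ)
    (Hyp : Submodule F (Fin (n + 1) → F))
    (hHyp : Hyp = LinearMap.ker (LinearMap.proj (R := F) (Fin.last n)))
    (X : Submodule F (Fin (n + 1) → F)) :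
    ∀ T : Submodule F (Fin (n + 1) → F),
      Fintype.card F *
          Nat.card {Z : Submodule F (Fin (n + 1) → F) //
            (Z ≤ Hyp ∧ X < Z ∧ Module.finrank F ↥Z = Module.finrank F ↥X + 1) ∧
              ¬ T ≤ Hyp ∧ T ⊓ Hyp = Z} =
        Nat.card {Y : Submodule F (Fin (n + 1) → F) //
          (¬ Y ≤ Hyp ∧ Y ⊓ Hyp = X) ∧ Y < T ∧
            Module.finrank F ↥T = Module.finrank F ↥Y + 1} := by
  intro T
  subst hHyp
  by_cases hP : ¬ T ≤ ker (proj (Fin.last n)) ∧ X < T ⊓ ker (proj (Fin.last n)) ∧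
      finrank F ↥(T ⊓ ker (proj (Fin.last n))) = finrank F X + 1
  · obtain ⟨hT, hXT, hdim⟩ := hP
    rw [Nat.card_eq_one_iff_unique.mpr ⟨⟨fun Z Z' => Subtype.ext (Z.2.2.2.symm.trans Z'.2.2.2)⟩,
      ⟨⟨_, ⟨inf_le_right, hXT, hdim⟩, hT, rfl⟩⟩⟩, natCard_covered_inf_ker_eq hT hXT hdim,
      Nat.card_eq_fintype_card, mul_one]
  · rw [Nat.card_eq_zero.mpr (.inl ?_), Nat.card_eq_zero.mpr (.inl ?_), mul_zero]
    · exact ⟨fun ⟨Y, ⟨hYker, hY⟩, hYT, hdim⟩ => hP (lt_inf_ker_of_inf_ker_eq hY hYker hYT hdim)⟩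
    · exact ⟨fun ⟨Z, ⟨_, hXZ, hdim⟩, hT, hTZ⟩ => hP ⟨hT, hTZ ▸ hXZ, hTZ ▸ hdim⟩⟩

/-- `θ_n` intertwines `q·U_n` with `U_{n+1}`: for every subspace `X` of the hyperplane
`Hyp ≅ F_q^n` of `F_q^{n+1}` one has `θ_n(q·U_n(X)) = U_{n+1}(θ_n(X))` in the permutation
module on subspaces of `F_q^{n+1}` (and hence, by linearity, the same holds for every `v`
in the span of the subspaces of `F_q^n`).  Here `θ_n(X) = Σ {Y : Y ⊄ Hyp, Y ⊓ Hyp = X}`,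
`U_n` is the up operator on subspaces of `Hyp` and `U_{n+1}` the up operator on subspaces
of `F_q^{n+1}`.  The identity is stated coefficientwise: for each subspace `T`, the
coefficient of `T` in `θ_n(q·U_n(X))` equals its coefficient in `U_{n+1}(θ_n(X))`. -/
theorem theta_intertwines (F : Type) [Field F] [Fintype F] (n : ℕ)
    (Hyp : Submodule F (Fin (n + 1) → F))
    (hHyp : Hyp = LinearMap.ker (LinearMap.proj (R := F) (Fin.last n)))
    (X : Submodule F (Fin (n + 1) → F)) (hX : X ≤ Hyp) :
    ∀ T : Submodule F (Fin (n + 1) → F),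
      Fintype.card F *
          Nat.card {Z : Submodule F (Fin (n + 1) → F) //
            (Z ≤ Hyp ∧ X < Z ∧ Module.finrank F ↥Z = Module.finrank F ↥X + 1) ∧
              ¬ T ≤ Hyp ∧ T ⊓ Hyp = Z} =
        Nat.card {Y : Submodule F (Fin (n + 1) → F) //
          (¬ Y ≤ Hyp ∧ Y ⊓ Hyp = X) ∧ Y < T ∧
            Module.finrank F ↥T = Module.finrank F ↥Y + 1} :=
  theta_intertwines_general F n Hyp hHyp X
end

section
/- With θ_n as above and the standard inner product on V(B_q(n+1)) (subspaces form an orthonormal basis), one has ⟨θ_n(w), θ_n(v)⟩ = q^{n−k}·⟨w, v⟩ for all w, v in the span of k-dimensional subspaces of F_q^n, 0 ≤ k ≤ n. In particular θ_n is injective. -/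
/-!
Let `H = ker f` be a hyperplane and `X ≤ H`. A subspace `Y ⊄ H` with `Y ⊓ H = X` is
`X ⊔ K ∙ (u + e)` for a vector `u ∈ H`, where `f e = 1`, and two such vectors `u, w` give the
same `Y` exactly when `u - w ∈ X`. So these `Y` are in bijection with `H ⧸ X`, of cardinality
`q ^ (dim H - dim X)`. Distinct `X` have disjoint (and nonempty) sets of such `Y`, which gives
both the orthogonality and the injectivity of `θ`.
-/

open Module Submodule LinearMap

namespace Submodule

variable {K V : Type*} [Field K] [AddCommGroup V] [Module K V]

/-- For `f` the last coordinate, `θ_n(X)` is the sum of the elements of `thetaSupport f X`, so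
`⟨θ_n(X₁), θ_n(X₂)⟩` is the number of common elements of `thetaSupport f X₁` and
`thetaSupport f X₂`. -/
def thetaSupport (f : Dual K V) (X : Submodule K V) : Set (Submodule K V) :=
  {Y | ¬ Y ≤ ker f ∧ Y ⊓ ker f = X}

variable {f : Dual K V} {X : Submodule K V}

theorem sup_span_singleton_inf_ker (hX : X ≤ ker f) {v : V} (hv : f v ≠ 0) :
    (X ⊔ K ∙ v) ⊓ ker f = X := by
  refine le_antisymm ?_ (le_inf le_sup_left hX)
  rintro _ ⟨hxv, hker⟩
  obtain ⟨x, hx, _, hcv, rfl⟩ := mem_sup.1 hxv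
  obtain ⟨c, rfl⟩ := mem_span_singleton.1 hcv
  have hc : c = 0 := by
    simpa [mem_ker.1 (hX hx), hv] using mem_ker.1 hker
  simpa [hc] using hx

theorem sup_span_singleton_mem_thetaSupport (hX : X ≤ ker f) {v : V} (hv : f v ≠ 0) :
    X ⊔ K ∙ v ∈ thetaSupport f X :=
  ⟨fun h => hv (mem_ker.1 (h (mem_sup_right (mem_span_singleton_self v)))),
    sup_span_singleton_inf_ker hX hv⟩

theorem eq_sup_span_singleton_of_inf_ker_eq {Y : Submodule K V} (hY : Y ⊓ ker f = X) {y : V}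
    (hy : y ∈ Y) (hfy : f y ≠ 0) : Y = X ⊔ K ∙ y := by
  refine le_antisymm (fun v hv => ?_)
    (hY ▸ sup_le inf_le_left ((span_singleton_le_iff_mem _ _).2 hy))
  have hproj : v - (f v / f y) • y ∈ X :=
    hY ▸ ⟨sub_mem hv (Y.smul_mem _ hy), by simp [hfy]⟩
  have hmul : (f v / f y) • y ∈ K ∙ y := smul_mem _ _ (mem_span_singleton_self y)
  simpa using add_mem (mem_sup_left hproj) (mem_sup_right hmul)

theorem sup_span_singleton_eq_iff (hX : X ≤ ker f) {v w : V} (hfv : f v = f w) (hw : f w ≠ 0) :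
    X ⊔ K ∙ v = X ⊔ K ∙ w ↔ v - w ∈ X := by
  have hw_sup : w ∈ X ⊔ K ∙ w := mem_sup_right (mem_span_singleton_self w)
  constructor
  · intro h
    have hv : v ∈ X ⊔ K ∙ w := h ▸ mem_sup_right (mem_span_singleton_self v)
    rw [← sup_span_singleton_inf_ker hX hw]
    exact ⟨sub_mem hv hw_sup, by simp [hfv]⟩
  · intro h
    have hv : v ∈ X ⊔ K ∙ w := by simpa using add_mem (mem_sup_left h) hw_sup
    exact (eq_sup_span_singleton_of_inf_ker_eq (sup_span_singleton_inf_ker hX hw) hv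
      (hfv ▸ hw)).symm

variable {e : V}

def thetaSupportParam (hX : X ≤ ker f) (he : f e = 1) (u : ker f) : thetaSupport f X :=
  ⟨X ⊔ K ∙ ((u : V) + e), sup_span_singleton_mem_thetaSupport hX (by simp [he])⟩

theorem thetaSupportParam_surjective (hX : X ≤ ker f) (he : f e = 1) :
    Function.Surjective (thetaSupportParam hX he) := by
  rintro ⟨Y, hYH, hY⟩
  obtain ⟨y, hyY, hyH⟩ := SetLike.not_le_iff_exists.1 hYH
  have hfy : f y ≠ 0 := hyH
  refine ⟨⟨(f y)⁻¹ • y - e, by simp [hfy, he]⟩, Subtype.ext ?_⟩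
  have hy₁ : f ((f y)⁻¹ • y) ≠ 0 := by simp [hfy]
  simpa [thetaSupportParam] using
    (eq_sup_span_singleton_of_inf_ker_eq hY (Y.smul_mem _ hyY) hy₁).symm

theorem thetaSupportParam_eq_iff (hX : X ≤ ker f) (he : f e = 1) {u w : ker f} :
    thetaSupportParam hX he u = thetaSupportParam hX he w ↔ (u : V) - w ∈ X := by
  rw [thetaSupportParam, thetaSupportParam, Subtype.mk.injEq,
    sup_span_singleton_eq_iff hX (by simp) (by simp [he]), add_sub_add_right_eq_sub]

theorem natCard_thetaSupport_eq_natCard_quotient (hX : X ≤ ker f) (he : f e = 1) :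
    Nat.card (thetaSupport f X) = Nat.card (ker f ⧸ X.comap (ker f).subtype) :=
  Nat.card_congr <| (Setoid.quotientKerEquivOfSurjective _
    (thetaSupportParam_surjective hX he)).symm.trans <|
      Quotient.congrRight fun u w => by
        rw [Setoid.ker_def, thetaSupportParam_eq_iff, quotientRel_def, mem_comap]; rfl

theorem natCard_thetaSupport [Finite K] [FiniteDimensional K V] (hf : f ≠ 0)
    (hX : X ≤ ker f) :
    Nat.card (thetaSupport f X) = Nat.card K ^ (finrank K V - 1 - finrank K X) := by
  obtain ⟨e, he⟩ := LinearMap.surjective hf 1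
  have hquot := (X.comap (ker f).subtype).finrank_quotient_add_finrank
  rw [(comapSubtypeEquivOfLe hX).finrank_eq] at hquot
  have hker := Dual.finrank_ker_add_one_of_ne_zero hf
  rw [natCard_thetaSupport_eq_natCard_quotient hX he, natCard_eq_pow_finrank (K := K)]
  congr 1
  omega

theorem thetaSupport_injOn (hf : f ≠ 0) : Set.InjOn (thetaSupport f) {X | X ≤ ker f} := by
  intro X₁ hX₁ X₂ _ h
  obtain ⟨e, he⟩ := LinearMap.surjective hf 1
  have hmem := sup_span_singleton_mem_thetaSupport hX₁ (v := e) (by simp [he])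
  exact hmem.2.symm.trans (h ▸ hmem).2

end Submodule

open scoped Classical
theorem theta_inner_product_general (F : Type) [Field F] [Fintype F] (n k : ℕ)
    (Hyp : Submodule F (Fin (n + 1) → F))
    (hHyp : Hyp = LinearMap.ker (LinearMap.proj (R := F) (Fin.last n))) :
    (∀ X₁ X₂ : Submodule F (Fin (n + 1) → F), X₁ ≤ Hyp → X₂ ≤ Hyp →
      Module.finrank F ↥X₁ = k → Module.finrank F ↥X₂ = k →
      (Nat.card {Y : Submodule F (Fin (n + 1) → F) //
          (¬ Y ≤ Hyp ∧ Y ⊓ Hyp = X₁) ∧ (¬ Y ≤ Hyp ∧ Y ⊓ Hyp = X₂)} : ℂ) =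
        (Fintype.card F : ℂ) ^ (n - k) * (if X₁ = X₂ then 1 else 0)) ∧
    (∀ X₁ X₂ : Submodule F (Fin (n + 1) → F), X₁ ≤ Hyp → X₂ ≤ Hyp →
      {Y : Submodule F (Fin (n + 1) → F) | ¬ Y ≤ Hyp ∧ Y ⊓ Hyp = X₁} =
        {Y : Submodule F (Fin (n + 1) → F) | ¬ Y ≤ Hyp ∧ Y ⊓ Hyp = X₂} →
      X₁ = X₂) := by
  subst hHyp
  set f : Dual F (Fin (n + 1) → F) := LinearMap.proj (Fin.last n)
  have hf : f ≠ 0 := fun h => by simpa [f] using congr($h (Pi.single (Fin.last n) 1))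
  refine ⟨fun X₁ X₂ hX₁ _ hk₁ _ => ?_,
    fun X₁ X₂ hX₁ hX₂ h => thetaSupport_injOn hf hX₁ hX₂ h⟩
  split_ifs with hX
  · subst hX
    change (Nat.card {Y // Y ∈ thetaSupport f X₁ ∧ Y ∈ thetaSupport f X₁} : ℂ) = _
    simp only [and_self]
    rw [natCard_thetaSupport hf hX₁, finrank_fin_fun, hk₁, Nat.card_eq_fintype_card]
    simp
  · rw [mul_zero, Nat.cast_eq_zero]
    exact Nat.card_eq_zero.2 (.inl ⟨fun Y => hX (Y.2.1.2.symm.trans Y.2.2.2)⟩)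

/-- With the standard inner product on `V(B_q(n+1))` (subspaces orthonormal), the map
`θ_n(X) = Σ {Y : Y ⊄ Hyp, Y ⊓ Hyp = X}` satisfies
`⟨θ_n(X₁), θ_n(X₂)⟩ = q^{n-k} ⟨X₁, X₂⟩` for `k`-dimensional subspaces `X₁, X₂` of the
hyperplane `Hyp ≅ F_q^n`, `0 ≤ k ≤ n` (and hence for all `w, v` in the span of the
`k`-dimensional subspaces); in particular `θ_n` is injective.  The inner product
`⟨θ_n(X₁), θ_n(X₂)⟩` is the number of `Y` with `Y ⊄ Hyp` and `Y ⊓ Hyp = X₁` as well as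
`Y ⊓ Hyp = X₂`. -/
theorem theta_inner_product (F : Type) [Field F] [Fintype F] (n k : ℕ) (hk : k ≤ n)
    (Hyp : Submodule F (Fin (n + 1) → F))
    (hHyp : Hyp = LinearMap.ker (LinearMap.proj (R := F) (Fin.last n))) :
    (∀ X₁ X₂ : Submodule F (Fin (n + 1) → F), X₁ ≤ Hyp → X₂ ≤ Hyp →
      Module.finrank F ↥X₁ = k → Module.finrank F ↥X₂ = k →
      (Nat.card {Y : Submodule F (Fin (n + 1) → F) //
          (¬ Y ≤ Hyp ∧ Y ⊓ Hyp = X₁) ∧ (¬ Y ≤ Hyp ∧ Y ⊓ Hyp = X₂)} : ℂ) =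
        (Fintype.card F : ℂ) ^ (n - k) * (if X₁ = X₂ then 1 else 0)) ∧
    (∀ X₁ X₂ : Submodule F (Fin (n + 1) → F), X₁ ≤ Hyp → X₂ ≤ Hyp →
      {Y : Submodule F (Fin (n + 1) → F) | ¬ Y ≤ Hyp ∧ Y ⊓ Hyp = X₁} =
        {Y : Submodule F (Fin (n + 1) → F) | ¬ Y ≤ Hyp ∧ Y ⊓ Hyp = X₂} →
      X₁ = X₂) :=
  theta_inner_product_general F n k Hyp hHyp
end
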